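/- arXiv:cs/0011011 — 3 statements merged into one kernel-verified Lean document; each statement's English description precedes it below -/
import Mathlib

section
/- XML-languages are not closed under union: there exist XML-languages L₁, L₂ over a common alphabet such that L₁ ∪ L₂ is not an XML-language. Specifically, with L = c·D*_{\{a,b\}}·c̄ and M = c·D*_{\{a,d\}}·c̄ (products of Dyck primes over {a,b} resp. {a,d}, wrapped in c, c̄), the union H = L ∪ M fails the context condition: (c, d d̄ c̄) is a context of a ā in H but not of a b b̄ ā, although both are well-formed factors in F_a(H). -/
variable {α : Type}

/-- Dyck words over `A ∪ Ā`: a letter is a pair `(a, true)` (opening tag `a`)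
or `(a, false)` (closing tag `ā`). `IsDyck w` means `w` is well-balanced. -/
inductive IsDyck : List (α × Bool) → Prop
  | nil : IsDyck []
  | cons (a : α) {u v : List (α × Bool)} : IsDyck u → IsDyck v →
      IsDyck ((a, true) :: u ++ (a, false) :: v)

/-- `IsDyckPrime a w`: `w` is a Dyck prime starting with the letter `a`,
i.e. `w = a u ā` with `u` well-balanced. Membership in `D_a`. -/
def IsDyckPrime (a : α) (w : List (α × Bool)) : Prop :=
  ∃ u, IsDyck u ∧ w = (a, true) :: u ++ [(a, false)]

/-- Membership in the set `D` of all Dyck primes. -/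
def IsPrime (w : List (α × Bool)) : Prop := ∃ a, IsDyckPrime a w

/-- `F_a(L) = D_a ∩ F(L)`: factors of words of `L` that are Dyck primes starting with `a`. -/
def Fa (L : Set (List (α × Bool))) (a : α) : Set (List (α × Bool)) :=
  {w | IsDyckPrime a w ∧ ∃ v ∈ L, w <:+: v}

/-- The surface `S_a(L)`: traces `a₁ ⋯ aₙ` of words `a u₁ ⋯ uₙ ā ∈ F_a(L)` with `uᵢ ∈ D_{aᵢ}`. -/
def Surface (L : Set (List (α × Bool))) (a : α) : Set (List α) :=
  {m | ∃ us : List (List (α × Bool)), List.Forall₂ IsDyckPrime m us ∧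
      (a, true) :: us.flatten ++ [(a, false)] ∈ Fa L a}

/-- The language generated by nonterminal `X_a` in the XML-grammar with production
bodies `R : α → Set (List α)` (a body `a₁ ⋯ aₙ ∈ R a` encodes `X_a → a X_{a₁} ⋯ X_{aₙ} ā`). -/
inductive Gen (R : α → Set (List α)) : α → List (α × Bool) → Prop
  | mk (a : α) (m : List α) (us : List (List (α × Bool))) :
      m ∈ R a → List.Forall₂ (Gen R) m us →
      Gen R a ((a, true) :: us.flatten ++ [(a, false)])

/-- The grammar `R` with axiom `X_{a₀}` is reduced: every nonterminal is accessible
from the axiom and every nonterminal is productive. -/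
def Reduced (R : α → Set (List α)) (a₀ : α) : Prop :=
  (∀ a, Relation.ReflTransGen (fun x y => ∃ m ∈ R x, y ∈ m) a₀ a) ∧
  (∀ a, ∃ w, Gen R a w)

/-- An XML-grammar: each production body set `R_a` is a regular language over the
nonterminal alphabet (identified with `A`). -/
def IsXMLGrammar (R : α → Set (List α)) : Prop :=
  ∀ a, Language.IsRegular (R a : Language α)

/-- An XML-language: a language generated by some XML-grammar. -/
def IsXMLLanguage (L : Set (List (α × Bool))) : Prop :=
  ∃ (a₀ : α) (R : α → Set (List α)), IsXMLGrammar R ∧ L = {w | Gen R a₀ w}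

/-- The set of contexts of `w` in `L`: pairs `(x, y)` with `x w y ∈ L`. -/
def Ctx (L : Set (List (α × Bool))) (w : List (α × Bool)) :
    Set (List (α × Bool) × List (α × Bool)) :=
  {p | p.1 ++ w ++ p.2 ∈ L}

/-- `L = c · D*_{a,b} · c̄` over `A = {a, b, c, d}` (encoded as `Fin 4` with
`a = 0`, `b = 1`, `c = 2`, `d = 3`): a `c`-wrapped product of Dyck primes
over the sub-alphabet `{a, b}`. -/
def Lcab : Set (List (Fin 4 × Bool)) :=
  {w | ∃ u, IsDyck u ∧ (∀ x ∈ u, x.1 = (0 : Fin 4) ∨ x.1 = (1 : Fin 4)) ∧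
    w = ((2 : Fin 4), true) :: u ++ [((2 : Fin 4), false)]}

/-- `M = c · D*_{a,d} · c̄`: a `c`-wrapped product of Dyck primes over `{a, d}`. -/
def Mcad : Set (List (Fin 4 × Bool)) :=
  {w | ∃ u, IsDyck u ∧ (∀ x ∈ u, x.1 = (0 : Fin 4) ∨ x.1 = (3 : Fin 4)) ∧
    w = ((2 : Fin 4), true) :: u ++ [((2 : Fin 4), false)]}

/-! ### Auxiliary lemmas -/

lemma isDyck_append' {u v : List (α × Bool)} (hu : IsDyck u) (hv : IsDyck v) :
    IsDyck (u ++ v) := by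
  induction hu with
  | nil => simpa
  | cons a h1 h2 ih1 ih2 => simpa using IsDyck.cons a h1 ih2

/-- production bodies: all words over letters satisfying `P`. -/
def Rp (P : α → Prop) : α → Set (List α) := fun _ => {m | ∀ x ∈ m, P x}

lemma gen_shape' {R : α → Set (List α)} {a : α} {w : List (α × Bool)} (h : Gen R a w) :
    ∃ u, w = (a, true) :: u ++ [(a, false)] := by
  cases h with
  | mk a m us hm hf => exact ⟨us.flatten, rfl⟩

lemma gen_inv' {R : α → Set (List α)} {a : α} {w : List (α × Bool)} (h : Gen R a w) :
    ∃ m us, m ∈ R a ∧ List.Forall₂ (Gen R) m us ∧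
      w = (a, true) :: us.flatten ++ [(a, false)] := by
  cases h with
  | mk a m us hm hf => exact ⟨m, us, hm, hf, rfl⟩

lemma forall2_flatten_nil' {R : α → Set (List α)} {m : List α}
    {us : List (List (α × Bool))} (h : List.Forall₂ (Gen R) m us)
    (hfl : us.flatten = []) : m = [] ∧ us = [] := by
  cases h with
  | nil => exact ⟨rfl, rfl⟩
  | @cons x v m' us' hx hf =>
      obtain ⟨u, rfl⟩ := gen_shape' hx
      simp at hfl

lemma gen_rp_aux' {P : α → Prop} (n : ℕ) : ∀ {a : α} {w : List (α × Bool)},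
    w.length ≤ n → Gen (Rp P) a w →
    ∃ u, IsDyck u ∧ (∀ x ∈ u, P x.1) ∧ w = (a, true) :: u ++ [(a, false)] := by
  induction n with
  | zero =>
      intro a w hlen h
      obtain ⟨u, rfl⟩ := gen_shape' h
      simp at hlen
  | succ n ih =>
      intro a w hlen h
      cases h with
      | mk a m us hm hf =>
        refine ⟨us.flatten, ?_, ?_, rfl⟩ <;>
        · have hm' : ∀ x ∈ m, P x := hm
          have hlen' : ∀ v ∈ us, v.length ≤ n := by
            intro v hv
            have h1 : v.length ≤ us.flatten.length :=
              (List.sublist_flatten_of_mem hv).length_le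
            rw [List.length_flatten] at h1
            simp at hlen
            omega
          clear hlen hm
          have key : IsDyck us.flatten ∧ ∀ x ∈ us.flatten, P x.1 := by
            induction hf with
            | nil => exact ⟨IsDyck.nil, by simp⟩
            | @cons b v m' us' hbv hf' ih2 =>
                have hv : v.length ≤ n := hlen' v (by simp)
                obtain ⟨u, hu, hup, rfl⟩ := ih hv hbv
                obtain ⟨h1, h2⟩ := ih2 (fun x hx => hm' x (by simp [hx]))
                  (fun v hv => hlen' v (by simp [hv]))
                have hPb : P b := hm' b (by simp)
                constructor
                · have hd : IsDyck ((b, true) :: u ++ [(b, false)]) := by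
                    simpa using IsDyck.cons b hu IsDyck.nil
                  simpa using isDyck_append' hd h1
                · intro x hx
                  rw [List.flatten_cons, List.mem_append] at hx
                  rcases hx with hx | hx
                  · simp at hx
                    rcases hx with rfl | hx | rfl
                    · exact hPb
                    · exact hup x hx
                    · exact hPb
                  · exact h2 x hx
          first | exact key.1 | exact key.2

lemma gen_rp_iff' {P : α → Prop} {a : α} {w : List (α × Bool)} :
    Gen (Rp P) a w ↔
    ∃ u, IsDyck u ∧ (∀ x ∈ u, P x.1) ∧ w = (a, true) :: u ++ [(a, false)] := by
  constructor
  · exact fun h => gen_rp_aux' w.length le_rfl h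
  · rintro ⟨u, hu, hup, rfl⟩
    have key : ∀ u : List (α × Bool), IsDyck u → (∀ x ∈ u, P x.1) →
        ∃ (m : List α) (us : List (List (α × Bool))),
          List.Forall₂ (Gen (Rp P)) m us ∧ us.flatten = u ∧ (∀ x ∈ m, P x) := by
      intro u hu
      induction hu with
      | nil => exact fun _ => ⟨[], [], List.Forall₂.nil, rfl, by simp⟩
      | @cons b u' v' hu' hv' ih1 ih2 =>
          intro hP
          have hPb : P b := hP (b, true) (by simp)
          obtain ⟨m1, us1, hf1, hfl1, hm1⟩ := ih1 (fun x hx => hP x (by simp [hx]))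
          obtain ⟨m2, us2, hf2, hfl2, hm2⟩ := ih2 (fun x hx => hP x (by simp [hx]))
          refine ⟨b :: m2, ((b, true) :: us1.flatten ++ [(b, false)]) :: us2,
            List.Forall₂.cons ?_ hf2, by simp [hfl1, hfl2], ?_⟩
          · exact Gen.mk b m1 us1 hm1 hf1
          · intro x hx
            rcases List.mem_cons.mp hx with rfl | hx
            · exact hPb
            · exact hm2 x hx
    obtain ⟨m, us, hf, hfl, hm⟩ := key u hu hup
    have := Gen.mk (R := Rp P) a m us hm hf
    rwa [hfl] at this

lemma isRegular_all' (P : α → Prop) [DecidablePred P] :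
    Language.IsRegular ({m : List α | ∀ x ∈ m, P x} : Language α) := by
  refine ⟨Bool, inferInstance, ⟨fun s a => s && decide (P a), true, {true}⟩, ?_⟩
  ext w
  have key : ∀ (w : List α) (s : Bool),
      List.foldl (fun s a => s && decide (P a)) s w = (s && decide (∀ x ∈ w, P x)) := by
    intro w
    induction w with
    | nil => simp
    | cons a w ih => intro s; simp [ih, Bool.and_assoc, List.forall_mem_cons]
  simp [DFA.mem_accepts, DFA.eval, DFA.evalFrom, key]
  rfl

lemma decompA {R : Fin 4 → Set (List (Fin 4))} {a₀ : Fin 4} {m : List (Fin 4)}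
    {us : List (List (Fin 4 × Bool))}
    (hf : List.Forall₂ (Gen R) m us)
    (heq : ((a₀, true) :: us.flatten ++ [(a₀, false)] : List (Fin 4 × Bool)) =
      [(2, true), (0, true), (0, false), (3, true), (3, false), (2, false)]) :
    a₀ = 2 ∧ m = [0, 3] ∧ Gen R 0 [(0, true), (0, false)] ∧
      Gen R 3 [(3, true), (3, false)] := by
  simp only [List.cons_append, List.cons_eq_cons, Prod.mk.injEq, and_true] at heq
  obtain ⟨⟨rfl, -⟩, heq⟩ := heq
  have heq2 : us.flatten = [(0, true), (0, false), (3, true), (3, false)] := by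
    have h5 : us.flatten ++ [((2 : Fin 4), false)] =
        [((0 : Fin 4), true), (0, false), (3, true), (3, false)] ++ [(2, false)] := by
      simpa using heq
    exact (List.append_inj' h5 rfl).1
  clear heq
  refine ⟨rfl, ?_⟩
  cases hf with
  | nil => simp at heq2
  | @cons x v m' us' hx hf' =>
      obtain ⟨u1, rfl⟩ := gen_shape' hx
      simp only [List.flatten_cons, List.cons_append, List.append_assoc,
        List.nil_append, List.cons_eq_cons, Prod.mk.injEq, and_true] at heq2
      obtain ⟨⟨rfl, -⟩, heq2⟩ := heq2
      rcases u1 with - | ⟨p, - | ⟨q, t⟩⟩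
      · simp only [List.nil_append, List.cons_eq_cons] at heq2
        obtain ⟨-, heq3⟩ := heq2
        cases hf' with
        | nil => simp at heq3
        | @cons y v2 m'' us'' hy hf'' =>
            obtain ⟨u2, rfl⟩ := gen_shape' hy
            simp only [List.flatten_cons, List.cons_append, List.append_assoc,
              List.nil_append, List.cons_eq_cons, Prod.mk.injEq, and_true] at heq3
            obtain ⟨⟨rfl, -⟩, heq3⟩ := heq3
            rcases u2 with - | ⟨p2, t2⟩
            · simp only [List.nil_append, List.cons_eq_cons] at heq3
              obtain ⟨-, heq4⟩ := heq3
              obtain ⟨rfl, rfl⟩ := forall2_flatten_nil' hf'' heq4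
              exact ⟨rfl, by simpa using hx, by simpa using hy⟩
            · simp at heq3
      · simp at heq2
      · obtain ⟨-, heq2⟩ := List.cons_eq_cons.mp heq2
        obtain ⟨-, heq2⟩ := List.cons_eq_cons.mp heq2
        cases t with
        | nil => simp at heq2
        | cons r t' => simp at heq2

lemma decompB {R : Fin 4 → Set (List (Fin 4))} {a₀ : Fin 4} {m : List (Fin 4)}
    {us : List (List (Fin 4 × Bool))}
    (hf : List.Forall₂ (Gen R) m us)
    (heq : ((a₀, true) :: us.flatten ++ [(a₀, false)] : List (Fin 4 × Bool)) =
      [(2, true), (0, true), (1, true), (1, false), (0, false), (2, false)]) :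
    Gen R 0 [(0, true), (1, true), (1, false), (0, false)] := by
  simp only [List.cons_append, List.cons_eq_cons, Prod.mk.injEq, and_true] at heq
  obtain ⟨⟨rfl, -⟩, heq⟩ := heq
  have heq2 : us.flatten = [(0, true), (1, true), (1, false), (0, false)] := by
    have h5 : us.flatten ++ [((2 : Fin 4), false)] =
        [((0 : Fin 4), true), (1, true), (1, false), (0, false)] ++ [(2, false)] := by
      simpa using heq
    exact (List.append_inj' h5 rfl).1
  clear heq
  cases hf with
  | nil => simp at heq2
  | @cons x v m' us' hx hf' =>
      obtain ⟨u1, rfl⟩ := gen_shape' hx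
      simp only [List.flatten_cons, List.cons_append, List.append_assoc,
        List.nil_append, List.cons_eq_cons, Prod.mk.injEq, and_true] at heq2
      obtain ⟨⟨rfl, -⟩, heq2⟩ := heq2
      rcases u1 with - | ⟨p, - | ⟨q, - | ⟨r, t⟩⟩⟩
      · simp at heq2
      · simp at heq2
      · simp only [List.cons_append, List.nil_append, List.cons_eq_cons,
          Prod.mk.injEq] at heq2
        obtain ⟨rfl, rfl, -, heq3⟩ := heq2
        simpa using hx
      · simp at heq2

/-- XML-languages are not closed under union: `L = c·D*_{a,b}·c̄` and
`M = c·D*_{a,d}·c̄` are XML-languages but `H = L ∪ M` is not; indeed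
`(c, d d̄ c̄)` is a context of `a ā` in `H` but not of `a b b̄ ā`, although
both words lie in `F_a(H)`. -/
theorem xml_not_closed_under_union :
    IsXMLLanguage Lcab ∧ IsXMLLanguage Mcad ∧ ¬ IsXMLLanguage (Lcab ∪ Mcad) ∧
    ([((2 : Fin 4), true)], [((3 : Fin 4), true), ((3 : Fin 4), false), ((2 : Fin 4), false)])
      ∈ Ctx (Lcab ∪ Mcad) [((0 : Fin 4), true), ((0 : Fin 4), false)] ∧
    ([((2 : Fin 4), true)], [((3 : Fin 4), true), ((3 : Fin 4), false), ((2 : Fin 4), false)])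
      ∉ Ctx (Lcab ∪ Mcad) [((0 : Fin 4), true), ((1 : Fin 4), true),
                           ((1 : Fin 4), false), ((0 : Fin 4), false)] ∧
    [((0 : Fin 4), true), ((0 : Fin 4), false)] ∈ Fa (Lcab ∪ Mcad) 0 ∧
    [((0 : Fin 4), true), ((1 : Fin 4), true), ((1 : Fin 4), false), ((0 : Fin 4), false)]
      ∈ Fa (Lcab ∪ Mcad) 0 := by
  -- some Dyck certificates
  have dyck2 : ∀ (a : Fin 4), IsDyck [(a, true), (a, false)] := by
    intro a
    simpa using IsDyck.cons a IsDyck.nil IsDyck.nil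
  have dyckA : IsDyck [((0 : Fin 4), true), (0, false), (3, true), (3, false)] := by
    simpa using IsDyck.cons (0 : Fin 4) IsDyck.nil (dyck2 3)
  have dyckB : IsDyck [((0 : Fin 4), true), (1, true), (1, false), (0, false)] := by
    simpa using IsDyck.cons (0 : Fin 4) (dyck2 1) IsDyck.nil
  -- membership of the two witness words
  have hwA : ([(2, true), (0, true), (0, false), (3, true), (3, false), (2, false)] :
      List (Fin 4 × Bool)) ∈ Mcad :=
    ⟨[(0, true), (0, false), (3, true), (3, false)], dyckA, by decide, rfl⟩
  have hwB : ([(2, true), (0, true), (1, true), (1, false), (0, false), (2, false)] :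
      List (Fin 4 × Bool)) ∈ Lcab :=
    ⟨[(0, true), (1, true), (1, false), (0, false)], dyckB, by decide, rfl⟩
  refine ⟨?_, ?_, ?_, ?_, ?_, ?_, ?_⟩
  · -- Lcab is XML
    refine ⟨2, Rp (fun x => x = 0 ∨ x = 1), fun a => isRegular_all' _, ?_⟩
    ext w
    rw [Set.mem_setOf_eq, gen_rp_iff']
    rfl
  · refine ⟨2, Rp (fun x => x = 0 ∨ x = 3), fun a => isRegular_all' _, ?_⟩
    ext w
    rw [Set.mem_setOf_eq, gen_rp_iff']
    rfl
  · -- the union is not XML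
    rintro ⟨a₀, R, -, hun⟩
    have hA : Gen R a₀ [(2, true), (0, true), (0, false), (3, true), (3, false), (2, false)] := by
      have : _ ∈ Lcab ∪ Mcad := Or.inr hwA
      rwa [hun] at this
    have hB : Gen R a₀ [(2, true), (0, true), (1, true), (1, false), (0, false), (2, false)] := by
      have : _ ∈ Lcab ∪ Mcad := Or.inl hwB
      rwa [hun] at this
    obtain ⟨mA, usA, hmA, hfA, heqA⟩ := gen_inv' hA
    obtain ⟨mB, usB, hmB, hfB, heqB⟩ := gen_inv' hB
    obtain ⟨rfl, hmA03, hgen0, hgen3⟩ := decompA hfA heqA.symm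
    have hgenB := decompB hfB heqB.symm
    -- build the forbidden word  c a b b̄ ā d d̄ c̄
    have hbad : Gen R 2 ((2, true) :: ([[((0:Fin 4), true), (1, true), (1, false), (0, false)],
        [((3:Fin 4), true), (3, false)]] : List (List (Fin 4 × Bool))).flatten ++ [(2, false)]) := by
      refine Gen.mk 2 [0, 3] _ ?_ ?_
      · rwa [hmA03] at hmA
      · exact List.Forall₂.cons hgenB (List.Forall₂.cons hgen3 List.Forall₂.nil)
    have hbad' : ([(2, true), (0, true), (1, true), (1, false), (0, false),
        (3, true), (3, false), (2, false)] : List (Fin 4 × Bool)) ∈ Lcab ∪ Mcad := by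
      rw [hun]
      simpa using hbad
    rcases hbad' with ⟨u, -, hP, he⟩ | ⟨u, -, hP, he⟩ <;>
    · simp only [List.cons_append, List.cons_eq_cons, Prod.mk.injEq, and_true] at he
      obtain ⟨-, he⟩ := he
      have hu : u = [(0, true), (1, true), (1, false), (0, false), (3, true), (3, false)] := by
        have h5 : u ++ [((2 : Fin 4), false)] =
            [((0:Fin 4), true), (1, true), (1, false), (0, false), (3, true), (3, false)]
              ++ [(2, false)] := by simpa using he.symm
        exact (List.append_inj' h5 rfl).1
      subst hu
      first
        | exact absurd (hP (3, true) (by decide)) (by decide)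
        | exact absurd (hP (1, true) (by decide)) (by decide)
  · -- context membership for a ā
    show _ ∈ Lcab ∪ Mcad
    exact Or.inr ⟨[(0, true), (0, false), (3, true), (3, false)], dyckA, by decide, rfl⟩
  · -- context non-membership for a b b̄ ā
    intro h
    rcases h with ⟨u, -, hP, he⟩ | ⟨u, -, hP, he⟩ <;>
    · simp only [List.cons_append, List.append_assoc, List.nil_append,
        List.cons_eq_cons, Prod.mk.injEq, and_true] at he
      obtain ⟨-, he⟩ := he
      have : u = [(0, true), (1, true), (1, false), (0, false), (3, true), (3, false)] := by
        have h5 : u ++ [((2 : Fin 4), false)] =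
            [((0:Fin 4), true), (1, true), (1, false), (0, false), (3, true), (3, false)]
              ++ [(2, false)] := by simpa using he.symm
        exact (List.append_inj' h5 rfl).1
      subst this
      first
        | exact absurd (hP (3, true) (by decide)) (by decide)
        | exact absurd (hP (1, true) (by decide)) (by decide)
  · -- a ā ∈ Fa
    refine ⟨⟨[], IsDyck.nil, rfl⟩, [(2, true), (0, true), (0, false), (2, false)], ?_, ?_⟩
    · exact Or.inl ⟨[(0, true), (0, false)], dyck2 0, by decide, rfl⟩
    · exact ⟨[(2, true)], [(2, false)], rfl⟩
  · -- a b b̄ ā ∈ Fa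
    refine ⟨⟨[(1, true), (1, false)], dyck2 1, rfl⟩,
      [(2, true), (0, true), (1, true), (1, false), (0, false), (2, false)], Or.inl hwB, ?_⟩
    exact ⟨[(2, true)], [(2, false)], rfl⟩
end

section
/- Every regular language K contained in the set of Dyck primes D_A has finite height: there is a bound H such that for every w ∈ K and every prefix u of w, the weight |u|_A − |u|_Ā is at most H. -/
variable {α : Type}

/-- The weight of a word: number of opening letters minus number of closing letters. -/
def wt (w : List (α × Bool)) : ℤ :=
  (w.countP fun x => x.2 : ℤ) - (w.countP fun x => !x.2 : ℤ)

/-- An iterating pair `X ⟹⁺ g X d` is lifting if (in the decomposition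
`ρ(g) = x̄ p x`) the word `p` is nonempty, equivalently if `g` has strictly
more opening than closing letters. -/
def Lifting (g : List (α × Bool)) : Prop := 0 < wt g

lemma wt_append (u v : List (α × Bool)) : wt (u ++ v) = wt u + wt v := by
  simp [wt, List.countP_append]; ring

lemma wt_nil : wt ([] : List (α × Bool)) = 0 := by simp [wt]

lemma wt_isDyck {w : List (α × Bool)} (h : IsDyck w) : wt w = 0 := by
  induction h with
  | nil => exact wt_nil
  | cons a hu hv ihu ihv =>
    rename_i u v
    have h : ((a, true) :: u ++ (a, false) :: v) = [(a, true)] ++ u ++ ([(a, false)] ++ v) := by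
      simp
    rw [h, wt_append, wt_append, wt_append, ihu, ihv]
    simp [wt]

lemma wt_isPrime {w : List (α × Bool)} (h : IsPrime w) : wt w = 0 := by
  obtain ⟨a, u, hu, rfl⟩ := h
  have : (a, true) :: u ++ [(a, false)] = [(a, true)] ++ u ++ [(a, false)] := rfl
  rw [this, wt_append, wt_append, wt_isDyck hu]
  simp [wt]

lemma exists_take_wt (u : List (α × Bool)) : ∀ k : ℤ, 0 ≤ k → k ≤ wt u →
    ∃ i ≤ u.length, wt (u.take i) = k := by
  induction u with
  | nil => intro k h0 h1; rw [wt_nil] at h1; exact ⟨0, by simp, by simp [wt]; omega⟩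
  | cons x t ih =>
    intro k h0 h1
    rcases eq_or_lt_of_le h0 with h | h
    · exact ⟨0, by simp, by simp [wt]; omega⟩
    · have hx : wt (x :: t) = wt [x] + wt t := wt_append [x] t
      have hside : 0 ≤ k - wt [x] ∧ k - wt [x] ≤ wt t := by
        rcases x with ⟨a, b⟩
        cases b
        all_goals simp [wt, List.countP_cons] at h1 hx ⊢
        all_goals omega
      obtain ⟨i, hi, hwi⟩ := ih (k - wt [x]) hside.1 hside.2
      refine ⟨i + 1, by simpa using hi, ?_⟩
      have h2 : (x :: t).take (i + 1) = [x] ++ t.take i := rfl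
      rw [h2, wt_append, hwi]; ring

/-- Proposition 7.4: every regular language `K` contained in the set of Dyck
primes has finite height: some `H` bounds the weight `|u|_A − |u|_Ā` of every
prefix `u` of every word of `K`. -/
theorem regular_dyck_language_finite_height [Fintype α]
    (K : Set (List (α × Bool)))
    (hreg : Language.IsRegular (K : Language (α × Bool)))
    (hK : ∀ w ∈ K, IsPrime w) :
    ∃ H : ℤ, ∀ w ∈ K, ∀ u : List (α × Bool), u <+: w → wt u ≤ H := by
  obtain ⟨σ, hfin, M, hM⟩ := hreg
  refine ⟨Fintype.card σ, ?_⟩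
  intro w hw u hu
  by_contra hlt
  push_neg at hlt
  set n := Fintype.card σ with hn
  have hch : ∀ k : Fin (n + 1), ∃ i ≤ u.length, wt (u.take i) = (k : ℤ) := by
    intro k
    refine exists_take_wt u k (by positivity) ?_
    have := k.isLt
    have : (k : ℤ) ≤ n := by exact_mod_cast Nat.lt_succ_iff.mp this
    omega
  choose f hfl hfw using hch
  obtain ⟨k1, k2, hne, heq⟩ := Fintype.exists_ne_map_eq_of_card_lt
    (fun k : Fin (n + 1) => M.eval (u.take (f k))) (by simp [hn])
  -- order so that f k1 < f k2
  wlog hord : f k1 < f k2 generalizing k1 k2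
  · refine this k2 k1 hne.symm heq.symm ?_
    rcases Nat.lt_trichotomy (f k1) (f k2) with h | h | h
    · exact absurd h hord
    · exfalso; apply hne; have := hfw k1; rw [h, hfw k2] at this
      exact Fin.ext (by exact_mod_cast this.symm)
    · exact h
  -- set up pumping
  set p1 := u.take (f k1) with hp1
  set y := (u.take (f k2)).drop (f k1) with hy
  have htk : u.take (f k1) = (u.take (f k2)).take (f k1) := by
    rw [List.take_take]
    congr 1
    omega
  have hp1y : p1 ++ y = u.take (f k2) := by
    rw [hp1, hy, htk]
    exact List.take_append_drop _ _
  obtain ⟨z, hz⟩ : u.take (f k2) <+: w := List.IsPrefix.trans (List.take_prefix _ _) hu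
  -- weight of y is nonzero
  have hwy : wt y ≠ 0 := by
    have h1 : wt p1 = (k1 : ℤ) := hfw k1
    have h2 := hfw k2
    rw [← hp1y, wt_append] at h2
    intro h
    apply hne
    apply Fin.ext
    have : (k1 : ℤ) = (k2 : ℤ) := by omega
    exact_mod_cast this
  -- eval equalities
  have hs : M.eval p1 = M.eval (p1 ++ y) := by rw [hp1y]; exact heq
  -- the pumped word
  have hw' : p1 ++ (y ++ (y ++ z)) ∈ K := by
    have hs2 : M.evalFrom (M.evalFrom M.start p1) y = M.evalFrom M.start p1 := by
      have h := hs.symm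
      simpa [DFA.eval, DFA.evalFrom_of_append] using h
    have : M.eval (p1 ++ (y ++ (y ++ z))) = M.eval w := by
      rw [← hz, ← hp1y]
      simp only [DFA.eval, DFA.evalFrom_of_append, hs2]
    have hwacc : w ∈ M.accepts := by rw [hM]; exact hw
    have : p1 ++ (y ++ (y ++ z)) ∈ M.accepts := by
      rw [DFA.mem_accepts, this, ← DFA.mem_accepts]; exact hwacc
    rw [hM] at this
    exact this
  have h1 : wt w = 0 := wt_isPrime (hK w hw)
  have h2 : wt (p1 ++ (y ++ (y ++ z))) = 0 := wt_isPrime (hK _ hw')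
  have h3 : wt w = wt p1 + wt y + wt z := by
    rw [← hz, ← hp1y, wt_append, wt_append]
  rw [wt_append, wt_append, wt_append] at h2
  omega
end

section
/- Let K be an XML-language generated by a reduced XML-grammar G. Then K is a regular language if and only if G is sequential, i.e., its nonterminals can be ordered so that in every production X_a → a m ā, every nonterminal occurring in m is strictly greater than X_a in this order (equivalently, the dependency graph on nonterminals, with an edge X_a → X_b whenever X_b occurs in some production body of X_a, is acyclic). -/
section ListLemmas

variable {γ δ : Type} {P : γ → δ → Prop}

theorem forall2_append {m₁ m₂ : List γ} {u₁ u₂ : List δ} (h₁ : List.Forall₂ P m₁ u₁)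
    (h₂ : List.Forall₂ P m₂ u₂) : List.Forall₂ P (m₁ ++ m₂) (u₁ ++ u₂) := by
  induction h₁ with
  | nil => exact h₂
  | cons h t ih => exact List.Forall₂.cons h ih

theorem forall2_exists_left : ∀ {m : List γ} {us : List δ}, List.Forall₂ P m us →
    ∀ u ∈ us, ∃ b ∈ m, P b u := by
  intro m us h
  induction h with
  | nil => simp
  | @cons b u m us hbu _ ih =>
    intro v hv
    rcases List.mem_cons.mp hv with rfl | hv
    · exact ⟨b, List.mem_cons_self .., hbu⟩
    · obtain ⟨c, hc, hcv⟩ := ih v hv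
      exact ⟨c, List.mem_cons_of_mem _ hc, hcv⟩

theorem forall2_exists_right : ∀ {m : List γ} {us : List δ}, List.Forall₂ P m us →
    ∀ b ∈ m, ∃ u ∈ us, P b u := by
  intro m us h
  induction h with
  | nil => simp
  | @cons b u m us hbu _ ih =>
    intro c hc
    rcases List.mem_cons.mp hc with rfl | hc
    · exact ⟨u, List.mem_cons_self .., hbu⟩
    · obtain ⟨v, hv, hcv⟩ := ih c hc
      exact ⟨v, List.mem_cons_of_mem _ hv, hcv⟩

theorem forall2_split : ∀ {us₁ : List δ} {m : List γ} {v : δ} {us₂ : List δ},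
    List.Forall₂ P m (us₁ ++ v :: us₂) →
    ∃ m₁ b m₂, m = m₁ ++ b :: m₂ ∧ List.Forall₂ P m₁ us₁ ∧ P b v ∧ List.Forall₂ P m₂ us₂ := by
  intro us₁
  induction us₁ with
  | nil =>
    intro m v us₂ h
    rw [List.nil_append] at h
    obtain ⟨b, m₂, hbv, hm₂, rfl⟩ := List.forall₂_cons_right_iff.mp h
    exact ⟨[], b, m₂, rfl, List.Forall₂.nil, hbv, hm₂⟩
  | cons u us₁ ih =>
    intro m v us₂ h
    rw [List.cons_append] at h
    obtain ⟨b, m', hbu, hm', rfl⟩ := List.forall₂_cons_right_iff.mp h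
    obtain ⟨m₁, c, m₂, rfl, h₁, h₂, h₃⟩ := ih hm'
    exact ⟨b :: m₁, c, m₂, rfl, List.Forall₂.cons hbu h₁, h₂, h₃⟩

theorem forall2_imp_mem {P' : γ → δ → Prop} : ∀ {m : List γ} {us : List δ},
    List.Forall₂ P m us → (∀ b ∈ m, ∀ u, P b u → P' b u) → List.Forall₂ P' m us := by
  intro m us h
  induction h with
  | nil => intro; exact List.Forall₂.nil
  | @cons b u m us hbu _ ih =>
    intro himp
    exact List.Forall₂.cons (himp b (List.mem_cons_self ..) u hbu)
      (ih fun c hc => himp c (List.mem_cons_of_mem _ hc))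

/-- Splitting a flatten ending in a letter. -/
theorem split_flatten {B : Type} {x : B} : ∀ (us : List (List B)) (w : List B),
    us.flatten = w ++ [x] →
    ∃ us₁ u₀ us₂, us = us₁ ++ (u₀ ++ [x]) :: us₂ ∧ (∀ v ∈ us₂, v = []) ∧
      us₁.flatten ++ u₀ = w := by
  intro us
  induction us using List.reverseRecOn with
  | nil =>
    intro w h
    simp at h
  | append_singleton us v ih =>
    intro w h
    rw [List.flatten_append, List.flatten_cons, List.flatten_nil, List.append_nil] at h
    rcases List.eq_nil_or_concat v with rfl | ⟨v₀, x', rfl⟩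
    · rw [List.append_nil] at h
      obtain ⟨us₁, u₀, us₂, rfl, hnil, hw⟩ := ih w h
      refine ⟨us₁, u₀, us₂ ++ [[]], by simp, ?_, hw⟩
      intro v hv
      rcases List.mem_append.mp hv with hv | hv
      · exact hnil v hv
      · simpa using hv
    · rw [List.concat_eq_append, ← List.append_assoc] at h
      obtain ⟨h1, h2⟩ := List.append_inj' h (by simp)
      obtain rfl : x' = x := by simpa using h2
      exact ⟨us, v₀, [], by simp, by simp, h1⟩

/-- Splitting `us.flatten ++ u = w ++ [x]`. -/
theorem split_flatten_append {B : Type} {x : B} {us : List (List B)} {u w : List B}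
    (h : us.flatten ++ u = w ++ [x]) :
    (∃ u₀, u = u₀ ++ [x] ∧ us.flatten ++ u₀ = w) ∨
    (u = [] ∧ ∃ us₁ u₀ us₂, us = us₁ ++ (u₀ ++ [x]) :: us₂ ∧ (∀ v ∈ us₂, v = []) ∧
      us₁.flatten ++ u₀ = w) := by
  rcases List.eq_nil_or_concat u with rfl | ⟨u₀, x', rfl⟩
  · rw [List.append_nil] at h
    exact Or.inr ⟨rfl, split_flatten us w h⟩
  · rw [List.concat_eq_append, ← List.append_assoc] at h
    obtain ⟨h1, h2⟩ := List.append_inj' h (by simp)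
    obtain rfl : x' = x := by simpa using h2
    exact Or.inl ⟨u₀, by simp, h1⟩

end ListLemmas

section Subst

variable {A B : Type}

/-- Substitution of languages `σ a` for letters `a` into the language `L`. -/
def SubLang (L : Set (List A)) (σ : A → Set (List B)) : Set (List B) :=
  {w | ∃ m ∈ L, ∃ us : List (List B), List.Forall₂ (fun a u => u ∈ σ a) m us ∧ w = us.flatten}

variable {Q : Type} (M : DFA A Q) {S : A → Type} (N : ∀ a, DFA B (S a))

/-- The ε-NFA recognizing the substitution. -/
def substεNFA : εNFA B (Q ⊕ (Q × Σ a : A, S a)) where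
  step z x :=
    match z, x with
    | Sum.inl q, none => Set.range fun a : A => Sum.inr (q, ⟨a, (N a).start⟩)
    | Sum.inl _, some _ => ∅
    | Sum.inr (q, ⟨a, s⟩), none => {z | s ∈ (N a).accept ∧ z = Sum.inl (M.step q a)}
    | Sum.inr (q, ⟨a, s⟩), some x => {Sum.inr (q, ⟨a, (N a).step s x⟩)}
  start := {Sum.inl M.start}
  accept := Sum.inl '' M.accept

/-- Invariant describing the states reachable after reading `w`. -/
def SubGood (w : List B) : Q ⊕ (Q × Σ a : A, S a) → Prop
  | Sum.inl q => ∃ m us, List.Forall₂ (fun a u => u ∈ (N a).accepts) m us ∧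
      M.evalFrom M.start m = q ∧ us.flatten = w
  | Sum.inr (q, ⟨a, s⟩) => ∃ m us u, List.Forall₂ (fun a u => u ∈ (N a).accepts) m us ∧
      M.evalFrom M.start m = q ∧ (N a).evalFrom (N a).start u = s ∧ us.flatten ++ u = w

theorem subGood_eps {w : List B} {z z' : Q ⊕ (Q × Σ a : A, S a)}
    (h : SubGood M N w z) (h' : z' ∈ (substεNFA M N).step z none) : SubGood M N w z' := by
  match z with
  | Sum.inl q =>
    obtain ⟨a, rfl⟩ := h'
    obtain ⟨m, us, hf, hq, hw⟩ := h
    exact ⟨m, us, [], hf, hq, rfl, by simpa using hw⟩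
  | Sum.inr (q, ⟨a, s⟩) =>
    obtain ⟨hacc, rfl⟩ := h'
    obtain ⟨m, us, u, hf, hq, hs, hw⟩ := h
    refine ⟨m ++ [a], us ++ [u], ?_, ?_, ?_⟩
    · refine forall2_append hf (List.forall₂_cons.mpr ⟨?_, List.Forall₂.nil⟩)
      rw [DFA.mem_accepts, show (N a).eval u = s from hs]
      exact hacc
    · rw [DFA.evalFrom_append_singleton, hq]
    · simpa using hw

theorem εClosure_subGood {w : List B} {T : Set (Q ⊕ (Q × Σ a : A, S a))}
    (hT : ∀ z ∈ T, SubGood M N w z) :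
    ∀ z ∈ (substεNFA M N).εClosure T, SubGood M N w z := by
  intro z hz
  induction hz with
  | base s hs => exact hT s hs
  | step s t ht _ ih => exact subGood_eps M N ih ht

theorem eps_start_mem {T} {q : Q} (h : Sum.inl q ∈ (substεNFA M N).εClosure T) (a : A) :
    Sum.inr (q, ⟨a, (N a).start⟩) ∈ (substεNFA M N).εClosure T :=
  εNFA.εClosure.step (Sum.inl q) _ ⟨a, rfl⟩ h

theorem eps_finish {T} {q : Q} {a : A} {s : S a}
    (h : Sum.inr (q, ⟨a, s⟩) ∈ (substεNFA M N).εClosure T) (hs : s ∈ (N a).accept) :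
    Sum.inl (M.step q a) ∈ (substεNFA M N).εClosure T :=
  εNFA.εClosure.step (Sum.inr (q, Sigma.mk a s)) _ ⟨hs, rfl⟩ h

theorem eps_chain {T} : ∀ (m : List A) {q : Q}, Sum.inl q ∈ (substεNFA M N).εClosure T →
    (∀ a ∈ m, (N a).start ∈ (N a).accept) →
    Sum.inl (M.evalFrom q m) ∈ (substεNFA M N).εClosure T := by
  intro m
  induction m with
  | nil => intro q h _; exact h
  | cons a m ih =>
    intro q h hacc
    have h1 : Sum.inl (M.step q a) ∈ (substεNFA M N).εClosure T :=
      eps_finish M N (eps_start_mem M N h a) (hacc a (List.mem_cons_self ..))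
    exact ih h1 fun b hb => hacc b (List.mem_cons_of_mem _ hb)

theorem substεNFA_eval (w : List B) :
    (substεNFA M N).eval w = {z | SubGood M N w z} := by
  induction w using List.reverseRecOn with
  | nil =>
    apply Set.eq_of_subset_of_subset
    · intro z hz
      refine εClosure_subGood M N ?_ z hz
      intro z' hz'
      obtain rfl : z' = Sum.inl M.start := hz'
      exact ⟨[], [], List.Forall₂.nil, rfl, rfl⟩
    · intro z hz
      match z with
      | Sum.inl q =>
        obtain ⟨m, us, hf, hq, hw⟩ := hz
        have hnil : ∀ u ∈ us, u = [] := List.flatten_eq_nil_iff.mp hw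
        have hacc : ∀ a ∈ m, (N a).start ∈ (N a).accept := by
          intro a ha
          obtain ⟨u, hu, hau⟩ := forall2_exists_right hf a ha
          rw [hnil u hu] at hau
          exact hau
        subst hq
        exact eps_chain M N m (εNFA.εClosure.base (Sum.inl M.start) rfl) hacc
      | Sum.inr (q, ⟨a, s⟩) =>
        obtain ⟨m, us, u, hf, hq, hs, hw⟩ := hz
        obtain ⟨hw1, hw2⟩ := List.append_eq_nil_iff.mp hw
        have hnil : ∀ u ∈ us, u = [] := List.flatten_eq_nil_iff.mp hw1
        have hacc : ∀ a ∈ m, (N a).start ∈ (N a).accept := by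
          intro a ha
          obtain ⟨u, hu, hau⟩ := forall2_exists_right hf a ha
          rw [hnil u hu] at hau
          exact hau
        subst hq
        subst hw2
        obtain rfl : (N a).start = s := hs
        have hbase : (Sum.inl M.start : Q ⊕ (Q × Σ a : A, S a)) ∈
            (substεNFA M N).εClosure (substεNFA M N).start :=
          εNFA.εClosure.base _ rfl
        exact eps_start_mem M N (eps_chain M N m hbase hacc) a
  | append_singleton w x ih =>
    rw [εNFA.eval_append_singleton, ih]
    apply Set.eq_of_subset_of_subset
    · intro z hz
      obtain ⟨t, ht, hz⟩ := εNFA.mem_stepSet_iff.mp hz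
      refine εClosure_subGood M N ?_ z hz
      intro z' hz'
      match t with
      | Sum.inl q => exact absurd hz' (by simp [substεNFA])
      | Sum.inr (q, ⟨a, s⟩) =>
        obtain rfl : z' = Sum.inr (q, ⟨a, (N a).step s x⟩) := hz'
        obtain ⟨m, us, u, hf, hq, hs, hw⟩ := ht
        exact ⟨m, us, u ++ [x], hf, hq, by rw [DFA.evalFrom_append_singleton, hs],
          by rw [← List.append_assoc, hw]⟩
    · intro z hz
      rw [εNFA.mem_stepSet_iff]
      match z with
      | Sum.inl q =>
        obtain ⟨m, us, hf, hq, hw⟩ := hz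
        obtain ⟨us₁, u₀, us₂, rfl, hnil, hw'⟩ := split_flatten us w hw
        obtain ⟨m₁, b, m₂, rfl, hf₁, hbv, hf₂⟩ := forall2_split hf
        refine ⟨Sum.inr (M.evalFrom M.start m₁, ⟨b, (N b).evalFrom (N b).start u₀⟩),
          ⟨m₁, us₁, u₀, hf₁, rfl, rfl, hw'⟩, ?_⟩
        have h0 : Sum.inr (M.evalFrom M.start m₁, ⟨b, (N b).evalFrom (N b).start (u₀ ++ [x])⟩) ∈
            (substεNFA M N).εClosure ((substεNFA M N).step
              (Sum.inr (M.evalFrom M.start m₁, ⟨b, (N b).evalFrom (N b).start u₀⟩)) (some x)) :=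
          εNFA.εClosure.base _ (by rw [DFA.evalFrom_append_singleton]; rfl)
        have h1 := eps_finish M N h0 ((DFA.mem_accepts (N b)).mp hbv)
        have h2 := eps_chain M N m₂ h1 ?_
        · rw [← DFA.evalFrom_append_singleton, ← DFA.evalFrom_of_append] at h2
          rw [← hq]
          simpa using h2
        · intro a ha
          obtain ⟨u, hu, hau⟩ := forall2_exists_right hf₂ a ha
          rw [hnil u hu] at hau
          exact hau
      | Sum.inr (q, ⟨a, s⟩) =>
        obtain ⟨m, us, u, hf, hq, hs, hw⟩ := hz
        rcases split_flatten_append hw with ⟨u₀, rfl, hw'⟩ | ⟨rfl, us₁, u₀, us₂, rfl, hnil, hw'⟩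
        · refine ⟨Sum.inr (q, ⟨a, (N a).evalFrom (N a).start u₀⟩),
            ⟨m, us, u₀, hf, hq, rfl, hw'⟩, ?_⟩
          refine εNFA.εClosure.base _ ?_
          rw [← hs, DFA.evalFrom_append_singleton]
          rfl
        · obtain ⟨m₁, b, m₂, rfl, hf₁, hbv, hf₂⟩ := forall2_split hf
          refine ⟨Sum.inr (M.evalFrom M.start m₁, ⟨b, (N b).evalFrom (N b).start u₀⟩),
            ⟨m₁, us₁, u₀, hf₁, rfl, rfl, hw'⟩, ?_⟩
          have h0 : Sum.inr (M.evalFrom M.start m₁, ⟨b, (N b).evalFrom (N b).start (u₀ ++ [x])⟩) ∈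
              (substεNFA M N).εClosure ((substεNFA M N).step
                (Sum.inr (M.evalFrom M.start m₁, ⟨b, (N b).evalFrom (N b).start u₀⟩)) (some x)) :=
            εNFA.εClosure.base _ (by rw [DFA.evalFrom_append_singleton]; rfl)
          have h1 := eps_finish M N h0 ((DFA.mem_accepts (N b)).mp hbv)
          have h2 := eps_chain M N m₂ h1 ?_
          · rw [← DFA.evalFrom_append_singleton, ← DFA.evalFrom_of_append] at h2
            have h3 := eps_start_mem M N h2 a
            rw [← hq]
            obtain rfl : (N a).start = s := hs
            simpa using h3
          · intro a ha
            obtain ⟨u, hu, hau⟩ := forall2_exists_right hf₂ a ha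
            rw [hnil u hu] at hau
            exact hau

theorem substεNFA_accepts :
    (substεNFA M N).accepts = (SubLang M.accepts (fun a => (N a).accepts) : Set (List B)) := by
  ext w
  constructor
  · rintro ⟨z, hz, hzw⟩
    rw [substεNFA_eval] at hzw
    obtain ⟨q, hq, rfl⟩ := hz
    obtain ⟨m, us, hf, hq', hw⟩ := hzw
    refine ⟨m, ?_, us, hf, hw.symm⟩
    change m ∈ (M.accepts : Language A)
    rw [DFA.mem_accepts, show M.eval m = q from hq']
    exact hq
  · rintro ⟨m, hm, us, hf, rfl⟩
    refine ⟨Sum.inl (M.evalFrom M.start m), ⟨_, (DFA.mem_accepts M).mp hm, rfl⟩, ?_⟩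
    rw [substεNFA_eval]
    exact ⟨m, us, hf, rfl, rfl⟩

theorem subLang_regular [Fintype A] {L : Set (List A)} {σ : A → Set (List B)}
    (hL : Language.IsRegular (L : Language A)) (hσ : ∀ a, Language.IsRegular (σ a : Language B)) :
    Language.IsRegular (SubLang L σ : Language B) := by
  obtain ⟨Q, fQ, M, hM⟩ := hL
  choose S fS N hN using hσ
  haveI : Fintype Q := fQ
  haveI : ∀ a, Fintype (S a) := fS
  haveI : Finite (Q ⊕ (Q × Σ a : A, S a)) := by infer_instance
  refine ⟨Set (Q ⊕ (Q × Σ a : A, S a)), Fintype.ofFinite _, (substεNFA M N).toNFA.toDFA, ?_⟩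
  rw [NFA.toDFA_correct, εNFA.toNFA_correct, substεNFA_accepts]
  have h1 : M.accepts = L := hM
  have h2 : (fun a => (N a).accepts) = fun a => (σ a : Set (List B)) := funext fun a => hN a
  rw [h1, h2]

end Subst

section WordDFA

variable {A : Type} [DecidableEq A]

/-- A DFA accepting exactly the word `ws`. -/
def wordDFA (ws : List A) : DFA A (Fin (ws.length + 1) ⊕ Unit) where
  step z x :=
    match z with
    | Sum.inl i =>
      if h : ws[(i : ℕ)]? = some x then
        Sum.inl ⟨(i : ℕ) + 1, by
          obtain ⟨hlt, -⟩ := List.getElem?_eq_some_iff.mp h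
          omega⟩
      else Sum.inr ()
    | Sum.inr _ => Sum.inr ()
  start := Sum.inl ⟨0, by omega⟩
  accept := {Sum.inl ⟨ws.length, by omega⟩}

theorem wordDFA_dead (ws : List A) : ∀ t : List A,
    (wordDFA ws).evalFrom (Sum.inr ()) t = Sum.inr () := by
  intro t
  induction t with
  | nil => rfl
  | cons y t ih => exact ih

theorem wordDFA_eval (ws : List A) : ∀ (t : List A) (i : ℕ) (hi : i ≤ ws.length),
    ((wordDFA ws).evalFrom (Sum.inl ⟨i, by omega⟩) t = Sum.inl ⟨ws.length, by omega⟩ ↔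
      t = ws.drop i) := by
  intro t
  induction t with
  | nil =>
    intro i hi
    simp only [DFA.evalFrom_nil, Sum.inl.injEq, Fin.mk.injEq]
    constructor
    · intro h; rw [h]; simp
    · intro h
      have := congrArg List.length h
      simp at this
      omega
  | cons y t ih =>
    intro i hi
    have hstep : (wordDFA ws).evalFrom (Sum.inl ⟨i, by omega⟩) (y :: t) =
        (wordDFA ws).evalFrom ((wordDFA ws).step (Sum.inl ⟨i, by omega⟩) y) t := rfl
    by_cases h : ws[i]? = some y
    · obtain ⟨hlt, hget⟩ := List.getElem?_eq_some_iff.mp h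
      have hs : (wordDFA ws).step (Sum.inl ⟨i, by omega⟩) y = Sum.inl ⟨i + 1, by omega⟩ := by
        simp [wordDFA, h]
      rw [hstep, hs, ih (i + 1) (by omega)]
      rw [List.drop_eq_getElem_cons hlt, hget]
      constructor
      · intro h'; rw [h']
      · intro h'; exact (List.cons_eq_cons.mp h').2
    · have hs : (wordDFA ws).step (Sum.inl ⟨i, by omega⟩) y = Sum.inr () := by
        simp only [wordDFA]
        rw [dif_neg h]
      rw [hstep, hs, wordDFA_dead]
      constructor
      · intro h'; exact absurd h' (by simp)
      · intro h'
        by_cases hlt : i < ws.length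
        · rw [List.drop_eq_getElem_cons hlt] at h'
          have : ws[i]? = some y := by
            rw [List.getElem?_eq_some_iff]
            exact ⟨hlt, ((List.cons_eq_cons.mp h'.symm).1)⟩
          exact absurd this h
        · rw [List.drop_eq_nil_iff.mpr (by omega)] at h'
          exact absurd h' (by simp)

theorem wordDFA_accepts (ws : List A) : (wordDFA ws).accepts = ({ws} : Set (List A)) := by
  ext x
  rw [DFA.mem_accepts]
  have : (wordDFA ws).eval x = (wordDFA ws).evalFrom (Sum.inl ⟨0, by omega⟩) x := rfl
  rw [this]
  constructor
  · intro h
    have h' : (wordDFA ws).evalFrom (Sum.inl ⟨0, by omega⟩) x = Sum.inl ⟨ws.length, by omega⟩ := h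
    have := (wordDFA_eval ws x 0 (by omega)).mp h'
    exact (by simpa using this : x = ws)
  · intro h
    change x = ws at h
    subst h
    exact (wordDFA_eval x x 0 (by omega)).mpr (by simp)

theorem singletonWord_regular (ws : List A) :
    Language.IsRegular ({ws} : Language A) :=
  ⟨Fin (ws.length + 1) ⊕ Unit, inferInstance, wordDFA ws, wordDFA_accepts ws⟩

theorem empty_regular {B : Type} : Language.IsRegular ((∅ : Set (List B)) : Language B) :=
  ⟨Unit, inferInstance, ⟨fun _ _ => (), (), ∅⟩, by
    ext x
    constructor
    · rintro ⟨⟩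
    · rintro ⟨⟩⟩

end WordDFA

variable {α : Type}

section Balance

/-- The balance (number of opening minus closing tags) of a word. -/
def bal (w : List (α × Bool)) : ℤ :=
  2 * (w.countP (fun p => p.2) : ℤ) - w.length

theorem bal_append (u v : List (α × Bool)) : bal (u ++ v) = bal u + bal v := by
  simp only [bal, List.countP_append, List.length_append]
  push_cast
  ring

theorem bal_open (a : α) : bal [(a, true)] = 1 := by simp [bal]

theorem bal_close (a : α) : bal [(a, false)] = -1 := by simp [bal]

theorem bal_flatten_zero {us : List (List (α × Bool))} (h : ∀ u ∈ us, bal u = 0) :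
    bal us.flatten = 0 := by
  induction us with
  | nil => simp [bal]
  | cons u us ih =>
    rw [List.flatten_cons, bal_append, h u (List.mem_cons_self ..),
      ih fun v hv => h v (List.mem_cons_of_mem _ hv)]
    ring

theorem bal_flatten_replicate (x : List (α × Bool)) : ∀ n : ℕ,
    bal (List.replicate n x).flatten = n * bal x := by
  intro n
  induction n with
  | zero => simp [bal]
  | succ n ih =>
    rw [List.replicate_succ, List.flatten_cons, bal_append, ih]
    push_cast
    ring

theorem gen_bal {R : α → Set (List α)} : ∀ (n : ℕ) (w : List (α × Bool)), w.length ≤ n →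
    ∀ a, Gen R a w → bal w = 0 := by
  intro n
  induction n with
  | zero =>
    intro w hw a hgen
    cases hgen with
    | mk a m us hm hf => simp at hw
  | succ n ih =>
    intro w hw a hgen
    cases hgen with
    | mk a m us hm hf =>
      have hlen : us.flatten.length + 2 ≤ n + 1 := by
        simpa [List.length_append] using hw
      have hus : ∀ u ∈ us, bal u = 0 := by
        intro u hu
        obtain ⟨b, _, hgb⟩ := forall2_exists_left hf u hu
        have hul : u.length ≤ us.flatten.length := (List.sublist_flatten_of_mem hu).length_le
        exact ih u (by omega) b hgb
      have : ((a, true) :: us.flatten ++ [(a, false)] : List (α × Bool)) =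
          [(a, true)] ++ us.flatten ++ [(a, false)] := by simp
      rw [this, bal_append, bal_append, bal_open, bal_close, bal_flatten_zero hus]
      ring

theorem gen_bal' {R : α → Set (List α)} {a : α} {w : List (α × Bool)} (h : Gen R a w) :
    bal w = 0 :=
  gen_bal w.length w le_rfl a h

end Balance

section Contexts

variable {R : α → Set (List α)}

theorem step_context (hprod : ∀ b, ∃ w, Gen R b w) {a a' : α}
    (h : ∃ m ∈ R a, a' ∈ m) :
    ∃ x y, 0 < bal x ∧ ∀ w, Gen R a' w → Gen R a (x ++ w ++ y) := by
  choose wit hwit using hprod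
  obtain ⟨m, hm, ha'⟩ := h
  obtain ⟨m₁, m₂, rfl⟩ := List.append_of_mem ha'
  refine ⟨(a, true) :: (m₁.map wit).flatten, (m₂.map wit).flatten ++ [(a, false)], ?_, ?_⟩
  · have h1 : ((a, true) :: (m₁.map wit).flatten : List (α × Bool)) =
        [(a, true)] ++ (m₁.map wit).flatten := by simp
    rw [h1, bal_append, bal_open, bal_flatten_zero]
    · omega
    · intro u hu
      obtain ⟨b, _, rfl⟩ := List.mem_map.mp hu
      exact gen_bal' (hwit b)
  · intro w hw
    have hf : List.Forall₂ (Gen R) (m₁ ++ a' :: m₂) (m₁.map wit ++ w :: m₂.map wit) := by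
      refine forall2_append ?_ (List.Forall₂.cons hw ?_)
      · exact List.forall₂_map_right_iff.mpr (List.forall₂_same.mpr fun b _ => hwit b)
      · exact List.forall₂_map_right_iff.mpr (List.forall₂_same.mpr fun b _ => hwit b)
    have := Gen.mk a _ _ hm hf
    have heq : ((a, true) :: (m₁.map wit ++ w :: m₂.map wit).flatten ++ [(a, false)] :
        List (α × Bool)) =
        ((a, true) :: (m₁.map wit).flatten) ++ w ++ ((m₂.map wit).flatten ++ [(a, false)]) := by
      simp [List.flatten_append]
    rwa [heq] at this

theorem trans_context (hprod : ∀ b, ∃ w, Gen R b w) {a a' : α}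
    (h : Relation.TransGen (fun x y => ∃ m ∈ R x, y ∈ m) a a') :
    ∃ x y, 0 < bal x ∧ ∀ w, Gen R a' w → Gen R a (x ++ w ++ y) := by
  induction h with
  | single h => exact step_context hprod h
  | tail _ h2 ih =>
    obtain ⟨x₁, y₁, hx₁, hctx₁⟩ := ih
    obtain ⟨x₂, y₂, hx₂, hctx₂⟩ := step_context hprod h2
    refine ⟨x₁ ++ x₂, y₂ ++ y₁, ?_, ?_⟩
    · rw [bal_append]; omega
    · intro w hw
      have := hctx₁ _ (hctx₂ w hw)
      simpa [List.append_assoc] using this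

theorem refl_context (hprod : ∀ b, ∃ w, Gen R b w) {a a' : α}
    (h : Relation.ReflTransGen (fun x y => ∃ m ∈ R x, y ∈ m) a a') :
    ∃ x y, ∀ w, Gen R a' w → Gen R a (x ++ w ++ y) := by
  induction h with
  | refl => exact ⟨[], [], fun w hw => by simpa using hw⟩
  | tail _ h2 ih =>
    obtain ⟨x₁, y₁, hctx₁⟩ := ih
    obtain ⟨x₂, y₂, _, hctx₂⟩ := step_context hprod h2
    refine ⟨x₁ ++ x₂, y₂ ++ y₁, fun w hw => ?_⟩
    have := hctx₁ _ (hctx₂ w hw)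
    simpa [List.append_assoc] using this

end Contexts

theorem acyclic_of_regular {R : α → Set (List α)} {a₀ : α} (hred : Reduced R a₀)
    (hreg : Language.IsRegular ({w | Gen R a₀ w} : Language (α × Bool))) :
    ∀ a : α, ¬ Relation.TransGen (fun x y => ∃ m ∈ R x, y ∈ m) a a := by
  intro a hcyc
  obtain ⟨x, y, hx, hctx⟩ := trans_context hred.2 hcyc
  obtain ⟨x₀, y₀, hctx₀⟩ := refl_context hred.2 (hred.1 a)
  obtain ⟨w₀, hw₀⟩ := hred.2 a
  have hgen : ∀ n : ℕ, Gen R a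
      ((List.replicate n x).flatten ++ w₀ ++ (List.replicate n y).flatten) := by
    intro n
    induction n with
    | zero => simpa using hw₀
    | succ n ih =>
      have := hctx _ ih
      have heq : x ++ ((List.replicate n x).flatten ++ w₀ ++ (List.replicate n y).flatten) ++ y =
          (List.replicate (n + 1) x).flatten ++ w₀ ++ (List.replicate (n + 1) y).flatten := by
        rw [List.replicate_succ (a := x), List.replicate_succ' (n := n) (a := y), List.flatten_cons,
          List.flatten_append, List.flatten_cons, List.flatten_nil, List.append_nil]
        simp [List.append_assoc]
      rwa [heq] at this
  obtain ⟨Q, fQ, M, hM⟩ := hreg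
  haveI : Fintype Q := fQ
  have hW : ∀ n : ℕ, (x₀ ++ ((List.replicate n x).flatten ++ w₀ ++
      (List.replicate n y).flatten) ++ y₀) ∈ M.accepts := by
    intro n
    rw [hM]
    exact hctx₀ _ (hgen n)
  obtain ⟨i, j, hne, heq⟩ := Finite.exists_ne_map_eq_of_infinite
    (fun n : ℕ => M.evalFrom M.start (x₀ ++ (List.replicate n x).flatten))
  -- mixed word: prefix from i, suffix from j
  have hmix : (x₀ ++ ((List.replicate i x).flatten ++ w₀ ++
      (List.replicate j y).flatten) ++ y₀) ∈ M.accepts := by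
    have hsplit : ∀ n m : ℕ, (x₀ ++ ((List.replicate n x).flatten ++ w₀ ++
        (List.replicate m y).flatten) ++ y₀) =
        (x₀ ++ (List.replicate n x).flatten) ++
          (w₀ ++ (List.replicate m y).flatten ++ y₀) := by
      intro n m; simp [List.append_assoc]
    have h1 := hW j
    rw [DFA.mem_accepts] at h1 ⊢
    have e1 : M.eval (x₀ ++ ((List.replicate j x).flatten ++ w₀ ++
        (List.replicate j y).flatten) ++ y₀) = M.evalFrom (M.evalFrom M.start
          (x₀ ++ (List.replicate j x).flatten))
          (w₀ ++ (List.replicate j y).flatten ++ y₀) := by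
      rw [hsplit j j]; exact M.evalFrom_of_append _ _ _
    have e2 : M.eval (x₀ ++ ((List.replicate i x).flatten ++ w₀ ++
        (List.replicate j y).flatten) ++ y₀) = M.evalFrom (M.evalFrom M.start
          (x₀ ++ (List.replicate i x).flatten))
          (w₀ ++ (List.replicate j y).flatten ++ y₀) := by
      rw [hsplit i j]; exact M.evalFrom_of_append _ _ _
    rw [e1] at h1
    rw [e2, heq]
    exact h1
  -- balances
  have hb1 : bal (x₀ ++ ((List.replicate i x).flatten ++ w₀ ++
      (List.replicate j y).flatten) ++ y₀) = 0 := by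
    rw [hM] at hmix
    exact gen_bal' hmix
  have hb2 : bal (x₀ ++ ((List.replicate j x).flatten ++ w₀ ++
      (List.replicate j y).flatten) ++ y₀) = 0 := by
    have := hW j
    rw [hM] at this
    exact gen_bal' this
  simp only [bal_append, bal_flatten_replicate] at hb1 hb2
  have : (i : ℤ) * bal x = (j : ℤ) * bal x := by omega
  have hij : (i : ℤ) = j := by
    have := mul_right_cancel₀ (by omega : bal x ≠ 0) this
    exact this
  exact hne (by exact_mod_cast hij)

theorem subLang_congr {A B : Type} {L : Set (List A)} {σ σ' : A → Set (List B)}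
    (h : ∀ m ∈ L, ∀ b ∈ m, σ b = σ' b) : SubLang L σ = SubLang L σ' := by
  ext w
  constructor
  · rintro ⟨m, hm, us, hf, rfl⟩
    exact ⟨m, hm, us, forall2_imp_mem hf fun b hb u hu => (h m hm b hb) ▸ hu, rfl⟩
  · rintro ⟨m, hm, us, hf, rfl⟩
    exact ⟨m, hm, us, forall2_imp_mem hf fun b hb u hu => (h m hm b hb).symm ▸ hu, rfl⟩

/-- The language of `X_a` as a substitution into the fixed word `[0,1,2]`. -/
theorem gen_eq_sub (R : α → Set (List α)) (a : α) :
    {w | Gen R a w} = SubLang ({[0, 1, 2]} : Set (List (Fin 3)))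
      ![{[((a : α), true)]}, SubLang (R a) (fun b => {w | Gen R b w}), {[((a : α), false)]}] := by
  ext w
  constructor
  · intro hw
    cases hw with
    | mk a m us hm hf =>
      refine ⟨[0, 1, 2], rfl, [[(a, true)], us.flatten, [(a, false)]], ?_, by simp⟩
      refine List.Forall₂.cons (by simp) (List.Forall₂.cons ?_ (List.Forall₂.cons (by simp)
        List.Forall₂.nil))
      show us.flatten ∈ SubLang (R a) fun b => {w | Gen R b w}
      exact ⟨m, hm, us, hf, rfl⟩
  · rintro ⟨l, hl, us', hf, rfl⟩
    obtain rfl : l = [0, 1, 2] := hl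
    obtain ⟨u0, us1, h0, hf1, rfl⟩ := List.forall₂_cons_left_iff.mp hf
    obtain ⟨u1, us2, h1, hf2, rfl⟩ := List.forall₂_cons_left_iff.mp hf1
    obtain ⟨u2, us3, h2, hf3, rfl⟩ := List.forall₂_cons_left_iff.mp hf2
    obtain rfl : us3 = [] := List.forall₂_nil_left_iff.mp hf3
    obtain rfl : u0 = [(a, true)] := by simpa using h0
    obtain rfl : u2 = [(a, false)] := by simpa using h2
    obtain ⟨m, hm, us, hf', rfl⟩ : u1 ∈ SubLang (R a) fun b => {w | Gen R b w} := by
      simpa using h1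
    have := Gen.mk a m us hm hf'
    simpa using this

theorem regular_of_acyclic [Fintype α] (R : α → Set (List α)) (hG : IsXMLGrammar R)
    (hacyc : ∀ a : α, ¬ Relation.TransGen (fun x y => ∃ m ∈ R x, y ∈ m) a a) (a : α) :
    Language.IsRegular ({w | Gen R a w} : Language (α × Bool)) := by
  classical
  have htrans : IsTrans α (fun b a => Relation.TransGen (fun x y => ∃ m ∈ R x, y ∈ m) a b) :=
    ⟨fun x y z h1 h2 => Relation.TransGen.trans h2 h1⟩
  have hirr : IsIrrefl α (fun b a => Relation.TransGen (fun x y => ∃ m ∈ R x, y ∈ m) a b) :=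
    ⟨hacyc⟩
  have wf : WellFounded (fun b a => Relation.TransGen (fun x y => ∃ m ∈ R x, y ∈ m) a b) :=
    Finite.wellFounded_of_trans_of_irrefl _
  refine wf.induction
    (C := fun a => Language.IsRegular ({w | Gen R a w} : Language (α × Bool))) a ?_
  intro a ih
  have hσ' : ∀ b : α, Language.IsRegular
      ((if Relation.TransGen (fun x y => ∃ m ∈ R x, y ∈ m) a b then {w | Gen R b w}
        else (∅ : Set (List (α × Bool)))) : Language (α × Bool)) := by
    intro b
    by_cases h : Relation.TransGen (fun x y => ∃ m ∈ R x, y ∈ m) a b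
    · exact cast (congrArg (fun L : Set (List (α × Bool)) => Language.IsRegular (L : Language (α × Bool))) (if_pos h : (if Relation.TransGen (fun x y => ∃ m ∈ R x, y ∈ m) a b then {w | Gen R b w} else (∅ : Set (List (α × Bool)))) = _).symm) (ih b h)
    · exact cast (congrArg (fun L : Set (List (α × Bool)) => Language.IsRegular (L : Language (α × Bool))) (if_neg h : (if Relation.TransGen (fun x y => ∃ m ∈ R x, y ∈ m) a b then {w | Gen R b w} else (∅ : Set (List (α × Bool)))) = _).symm) empty_regular
  have hmid : Language.IsRegular
      (SubLang (R a) (fun b => {w | Gen R b w}) : Language (α × Bool)) := by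
    have heqσ : SubLang (R a) (fun b => {w | Gen R b w}) = SubLang (R a)
        (fun b => if Relation.TransGen (fun x y => ∃ m ∈ R x, y ∈ m) a b then {w | Gen R b w}
          else ∅) := by
      refine subLang_congr ?_
      intro m hm b hb
      rw [if_pos (Relation.TransGen.single ⟨m, hm, hb⟩)]
    rw [heqσ]
    exact subLang_regular (hG a) hσ'
  rw [show ({w | Gen R a w} : Language (α × Bool)) = _ from gen_eq_sub R a]
  refine subLang_regular (singletonWord_regular _) ?_
  intro i
  fin_cases i
  · exact singletonWord_regular ([((a : α), true)] : List (α × Bool))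
  · simpa using hmid
  · exact singletonWord_regular ([((a : α), false)] : List (α × Bool))

/-- Proposition 7.2: an XML-language `K` generated by a reduced XML-grammar `G`
is regular iff `G` is sequential, i.e. the dependency graph on nonterminals
(with an edge `X_a → X_b` whenever `X_b` occurs in some production body of
`X_a`) is acyclic. -/
theorem xml_regular_iff_sequential [Fintype α]
    (R : α → Set (List α)) (a₀ : α)
    (hG : IsXMLGrammar R) (hred : Reduced R a₀) :
    Language.IsRegular ({w | Gen R a₀ w} : Language (α × Bool)) ↔
      ∀ a : α, ¬ Relation.TransGen (fun x y => ∃ m ∈ R x, y ∈ m) a a := by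
  constructor
  · exact fun hreg => acyclic_of_regular hred hreg
  · exact fun hacyc => regular_of_acyclic R hG hacyc a₀
end
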